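/- arXiv:2504.04069 — 2 statements merged into one kernel-verified Lean document; each statement's English description precedes it below -/
import Mathlib

section
/- Let M ∈ ℝ^{m×n} have at least one positive entry. (i) If (u*,v*) is an optimal solution of PSV(−M) with σ* = ⟨u*, −Mv*⟩, then σ* < 0 and (√(−σ*)·u*, √(−σ*)·v*) is an optimal solution of min{‖M − uvᵀ‖_F² : u ∈ ℝ^m, u ≥ 0, v ∈ ℝ^n, v ≥ 0}. (ii) Conversely, if (p*,q*) is an optimal solution of that rank-one nonnegative approximation problem, then p* ≠ 0, q* ≠ 0 and (p*/‖p*‖, q*/‖q*‖) is an optimal solution of PSV(−M). -/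
open Matrix

/-- Euclidean norm of a vector in `ℝ^n`. -/
noncomputable def vnorm {n : ℕ} (v : Fin n → ℝ) : ℝ := Real.sqrt (v ⬝ᵥ v)

/-- Squared Frobenius norm of a real matrix. -/
noncomputable def frobSq {m n : ℕ} (P : Matrix (Fin m) (Fin n) ℝ) : ℝ :=
  ∑ i, ∑ j, (P i j) ^ 2

/-- `(u,v)` is an optimal solution of the least Pareto singular value problem `PSV(A)`. -/
def IsOptPSV {m n : ℕ} (A : Matrix (Fin m) (Fin n) ℝ)
    (u : Fin m → ℝ) (v : Fin n → ℝ) : Prop :=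
  (∀ i, 0 ≤ u i) ∧ vnorm u = 1 ∧ (∀ j, 0 ≤ v j) ∧ vnorm v = 1 ∧
    ∀ u' v', (∀ i, 0 ≤ u' i) → vnorm u' = 1 → (∀ j, 0 ≤ v' j) → vnorm v' = 1 →
      u ⬝ᵥ A.mulVec v ≤ u' ⬝ᵥ A.mulVec v'

/-- `(p,q)` is an optimal solution of the best nonnegative rank-one approximation problem
`min ‖M − uvᵀ‖_F²` over `u, v ≥ 0`. -/
def IsOptR1 {m n : ℕ} (M : Matrix (Fin m) (Fin n) ℝ)
    (p : Fin m → ℝ) (q : Fin n → ℝ) : Prop :=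
  (∀ i, 0 ≤ p i) ∧ (∀ j, 0 ≤ q j) ∧
    ∀ u v, (∀ i, 0 ≤ u i) → (∀ j, 0 ≤ v j) →
      frobSq (M - Matrix.vecMulVec p q) ≤ frobSq (M - Matrix.vecMulVec u v)

lemma dot_self_nonneg' {n : ℕ} (u : Fin n → ℝ) : 0 ≤ u ⬝ᵥ u :=
  Finset.sum_nonneg fun i _ => mul_self_nonneg _

lemma vnorm_sq {n : ℕ} (u : Fin n → ℝ) : vnorm u * vnorm u = u ⬝ᵥ u :=
  Real.mul_self_sqrt (dot_self_nonneg' u)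

lemma vnorm_nonneg' {n : ℕ} (u : Fin n → ℝ) : 0 ≤ vnorm u := Real.sqrt_nonneg _

lemma vnorm_eq_zero' {n : ℕ} {u : Fin n → ℝ} (h : vnorm u = 0) : u = 0 := by
  have h2 : u ⬝ᵥ u = 0 := by have := vnorm_sq u; rw [h] at this; linarith
  funext i
  have h3 := (Finset.sum_eq_zero_iff_of_nonneg (fun k _ => mul_self_nonneg (u k))).mp h2 i
    (Finset.mem_univ i)
  simpa using mul_self_eq_zero.mp h3

lemma vnorm_smul' {n : ℕ} (c : ℝ) (hc : 0 ≤ c) (u : Fin n → ℝ) :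
    vnorm (c • u) = c * vnorm u := by
  unfold vnorm
  rw [smul_dotProduct, dotProduct_smul, smul_eq_mul, smul_eq_mul, ← mul_assoc,
    Real.sqrt_mul (mul_self_nonneg c), Real.sqrt_mul_self hc]

lemma frob_expand {m n : ℕ} (M : Matrix (Fin m) (Fin n) ℝ) (u : Fin m → ℝ) (v : Fin n → ℝ) :
    frobSq (M - vecMulVec u v)
      = frobSq M - 2 * (u ⬝ᵥ M.mulVec v) + (u ⬝ᵥ u) * (v ⬝ᵥ v) := by
  have h1 : u ⬝ᵥ M.mulVec v = ∑ i, ∑ j, u i * (M i j * v j) := by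
    simp [dotProduct, mulVec, Finset.mul_sum]
  have h2 : (u ⬝ᵥ u) * (v ⬝ᵥ v) = ∑ i, ∑ j, (u i * u i) * (v j * v j) := by
    rw [dotProduct, dotProduct, Finset.sum_mul_sum]
  rw [frobSq, frobSq, h1, h2, Finset.mul_sum]
  simp only [Finset.mul_sum, Matrix.sub_apply, vecMulVec_apply]
  rw [← Finset.sum_sub_distrib, ← Finset.sum_add_distrib]
  refine Finset.sum_congr rfl fun i _ => ?_
  rw [← Finset.sum_sub_distrib, ← Finset.sum_add_distrib]
  refine Finset.sum_congr rfl fun j _ => ?_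
  ring

lemma single_nonneg' {k : ℕ} (i : Fin k) : ∀ j, (0:ℝ) ≤ (Pi.single i 1 : Fin k → ℝ) j := by
  intro j
  rcases eq_or_ne j i with rfl | h
  · simp
  · simp [Pi.single_apply, h]

lemma vnorm_single {k : ℕ} (i : Fin k) : vnorm (Pi.single i 1 : Fin k → ℝ) = 1 := by
  unfold vnorm
  rw [single_dotProduct]
  simp

lemma single_dot_mulVec {m n : ℕ} (M : Matrix (Fin m) (Fin n) ℝ) (i : Fin m) (j : Fin n) :
    (Pi.single i 1 : Fin m → ℝ) ⬝ᵥ M.mulVec (Pi.single j 1) = M i j := by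
  rw [single_dotProduct]
  simp [mulVec, dotProduct_single]

lemma single_dot_self {k : ℕ} (i : Fin k) :
    (Pi.single i 1 : Fin k → ℝ) ⬝ᵥ (Pi.single i 1 : Fin k → ℝ) = 1 := by
  rw [single_dotProduct]; simp

lemma vnorm_zero {k : ℕ} : vnorm (0 : Fin k → ℝ) = 0 := by
  simp [vnorm]

/-- key bound: optimality of PSV gives a Cauchy-type bound against M. -/
lemma psv_bound {m n : ℕ} {M : Matrix (Fin m) (Fin n) ℝ} {u : Fin m → ℝ} {v : Fin n → ℝ}
    (h : IsOptPSV (-M) u v) (u' : Fin m → ℝ) (v' : Fin n → ℝ)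
    (hu' : ∀ i, 0 ≤ u' i) (hv' : ∀ j, 0 ≤ v' j) :
    u' ⬝ᵥ M.mulVec v' ≤ (-(u ⬝ᵥ (-M).mulVec v)) * (vnorm u' * vnorm v') := by
  obtain ⟨hu, hnu, hv, hnv, hopt⟩ := h
  rcases eq_or_lt_of_le (vnorm_nonneg' u') with h1 | h1
  · have hz : u' = 0 := vnorm_eq_zero' h1.symm
    rw [hz, vnorm_zero]
    simp
  rcases eq_or_lt_of_le (vnorm_nonneg' v') with h2 | h2
  · have hz : v' = 0 := vnorm_eq_zero' h2.symm
    rw [hz, vnorm_zero]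
    simp
  set s := vnorm u' with hs
  set t := vnorm v' with ht
  have hnu2 : vnorm (s⁻¹ • u') = 1 := by
    rw [vnorm_smul' _ (inv_nonneg.mpr h1.le), ← hs, inv_mul_cancel₀ h1.ne']
  have hnv2 : vnorm (t⁻¹ • v') = 1 := by
    rw [vnorm_smul' _ (inv_nonneg.mpr h2.le), ← ht, inv_mul_cancel₀ h2.ne']
  have key := hopt (s⁻¹ • u') (t⁻¹ • v')
    (fun i => mul_nonneg (inv_nonneg.mpr h1.le) (hu' i)) hnu2
    (fun j => mul_nonneg (inv_nonneg.mpr h2.le) (hv' j)) hnv2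
  have rhsE : (s⁻¹ • u') ⬝ᵥ (-M).mulVec (t⁻¹ • v')
      = s⁻¹ * (t⁻¹ * -(u' ⬝ᵥ M.mulVec v')) := by
    rw [mulVec_smul, neg_mulVec, smul_dotProduct, dotProduct_smul, dotProduct_neg,
      smul_eq_mul, smul_eq_mul]
  rw [rhsE] at key
  set w := u' ⬝ᵥ M.mulVec v' with hw
  set σ := u ⬝ᵥ (-M).mulVec v with hσ
  have h3 : s * t * σ ≤ s * t * (s⁻¹ * (t⁻¹ * -w)) :=
    mul_le_mul_of_nonneg_left key (le_of_lt (mul_pos h1 h2))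
  have h4 : s * t * (s⁻¹ * (t⁻¹ * -w)) = -w := by
    field_simp
  have h5 : -σ * (s * t) = -(s * t * σ) := by ring
  linarith

lemma psv_neg {m n : ℕ} {M : Matrix (Fin m) (Fin n) ℝ} {u : Fin m → ℝ} {v : Fin n → ℝ}
    (hpos : ∃ i j, 0 < M i j) (h : IsOptPSV (-M) u v) :
    u ⬝ᵥ (-M).mulVec v < 0 := by
  obtain ⟨i, j, hij⟩ := hpos
  obtain ⟨hu, hnu, hv, hnv, hopt⟩ := h
  have key := hopt (Pi.single i 1) (Pi.single j 1)
    (single_nonneg' i) (vnorm_single i) (single_nonneg' j) (vnorm_single j)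
  have e : (Pi.single i 1 : Fin m → ℝ) ⬝ᵥ (-M).mulVec (Pi.single j 1) = -(M i j) := by
    rw [neg_mulVec, dotProduct_neg, single_dot_mulVec]
  rw [e] at key
  linarith


set_option maxHeartbeats 800000 in
/-- Equivalence between `PSV(−M)` and the best nonnegative rank-one approximation of `M`,
for `M` with at least one positive entry. -/
theorem stmt17 {m n : ℕ} (M : Matrix (Fin m) (Fin n) ℝ)
    (hpos : ∃ i j, 0 < M i j) :
    (∀ u v, IsOptPSV (-M) u v →
      u ⬝ᵥ (-M).mulVec v < 0 ∧
      IsOptR1 M (Real.sqrt (-(u ⬝ᵥ (-M).mulVec v)) • u)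
        (Real.sqrt (-(u ⬝ᵥ (-M).mulVec v)) • v)) ∧
    (∀ p q, IsOptR1 M p q →
      p ≠ 0 ∧ q ≠ 0 ∧ IsOptPSV (-M) ((vnorm p)⁻¹ • p) ((vnorm q)⁻¹ • q)) := by

  constructor
  · -- Part (i)
    intro u v h
    have hσ : u ⬝ᵥ (-M).mulVec v < 0 := psv_neg hpos h
    refine ⟨hσ, ?_⟩
    obtain ⟨hu, hnu, hv, hnv, hopt⟩ := h
    set σ := u ⬝ᵥ (-M).mulVec v with hσdef
    set c := Real.sqrt (-σ) with hcdef
    have hc0 : 0 ≤ c := Real.sqrt_nonneg _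
    have hc2 : c * c = -σ := Real.mul_self_sqrt (by linarith)
    have huu : u ⬝ᵥ u = 1 := by rw [← vnorm_sq, hnu]; norm_num
    have hvv : v ⬝ᵥ v = 1 := by rw [← vnorm_sq, hnv]; norm_num
    have hMuv : u ⬝ᵥ M.mulVec v = -σ := by
      have : σ = -(u ⬝ᵥ M.mulVec v) := by rw [hσdef, neg_mulVec, dotProduct_neg]
      linarith
    refine ⟨fun i => mul_nonneg hc0 (hu i), fun j => mul_nonneg hc0 (hv j), ?_⟩
    intro u' v' hu' hv'
    rw [frob_expand, frob_expand]
    have e1 : (c • u) ⬝ᵥ M.mulVec (c • v) = c * (c * (u ⬝ᵥ M.mulVec v)) := by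
      rw [mulVec_smul, smul_dotProduct, dotProduct_smul, smul_eq_mul, smul_eq_mul]
    have e2 : (c • u) ⬝ᵥ (c • u) = c * (c * (u ⬝ᵥ u)) := by
      rw [smul_dotProduct, dotProduct_smul, smul_eq_mul, smul_eq_mul]
    have e3 : (c • v) ⬝ᵥ (c • v) = c * (c * (v ⬝ᵥ v)) := by
      rw [smul_dotProduct, dotProduct_smul, smul_eq_mul, smul_eq_mul]
    rw [e1, e2, e3, huu, hvv, hMuv]
    have hb := psv_bound ⟨hu, hnu, hv, hnv, hopt⟩ u' v' hu' hv'
    rw [← hσdef] at hb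
    have hu2 : u' ⬝ᵥ u' = vnorm u' * vnorm u' := (vnorm_sq u').symm
    have hv2 : v' ⬝ᵥ v' = vnorm v' * vnorm v' := (vnorm_sq v').symm
    rw [hu2, hv2]
    nlinarith [sq_nonneg (vnorm u' * vnorm v' + σ), hb, hc2]
  · -- Part (ii)
    intro p q hpq
    obtain ⟨hp, hq, hopt⟩ := hpq
    obtain ⟨i, j, hij⟩ := hpos
    -- comparison with M i j • e_i, e_j
    have key1 := hopt (M i j • (Pi.single i 1 : Fin m → ℝ)) (Pi.single j 1)
      (fun k => mul_nonneg hij.le (single_nonneg' i k)) (single_nonneg' j)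
    rw [frob_expand, frob_expand] at key1
    have e1 : (M i j • (Pi.single i 1 : Fin m → ℝ)) ⬝ᵥ M.mulVec (Pi.single j 1)
        = M i j * M i j := by
      rw [smul_dotProduct, smul_eq_mul, single_dot_mulVec]
    have e2 : (M i j • (Pi.single i 1 : Fin m → ℝ)) ⬝ᵥ (M i j • (Pi.single i 1 : Fin m → ℝ))
        = M i j * M i j := by
      rw [smul_dotProduct, dotProduct_smul, smul_eq_mul, smul_eq_mul, single_dot_self]
      ring
    rw [e1, e2, single_dot_self, mul_one] at key1
    -- comparison with 0, 0
    have key0 := hopt 0 0 (fun _ => le_refl 0) (fun _ => le_refl 0)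
    rw [frob_expand, frob_expand] at key0
    simp only [zero_dotProduct, mulVec_zero, dotProduct_zero, mul_zero, zero_mul,
      sub_zero, add_zero] at key0
    -- p ≠ 0
    have hp0 : p ≠ 0 := by
      intro h0
      rw [h0] at key1
      simp only [zero_dotProduct, mulVec_zero, dotProduct_zero, mul_zero, zero_mul,
        sub_zero, add_zero] at key1
      nlinarith
    have hq0 : q ≠ 0 := by
      intro h0
      rw [h0] at key1
      simp only [zero_dotProduct, mulVec_zero, dotProduct_zero, mul_zero, zero_mul,
        sub_zero, add_zero] at key1
      nlinarith
    set D := p ⬝ᵥ M.mulVec q with hD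
    refine ⟨hp0, hq0, ?_⟩
    set s := vnorm p with hs
    set t := vnorm q with ht
    have hspos : 0 < s := lt_of_le_of_ne (vnorm_nonneg' p)
      (fun h => hp0 (vnorm_eq_zero' h.symm))
    have htpos : 0 < t := lt_of_le_of_ne (vnorm_nonneg' q)
      (fun h => hq0 (vnorm_eq_zero' h.symm))
    have hpp : p ⬝ᵥ p = s * s := (vnorm_sq p).symm
    have hqq : q ⬝ᵥ q = t * t := (vnorm_sq q).symm
    rw [hpp, hqq] at key0
    -- D ≥ s²t²/2 > 0
    have hDpos : 0 < D := by nlinarith [mul_pos (mul_pos hspos htpos) (mul_pos hspos htpos)]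
    refine ⟨fun k => mul_nonneg (inv_nonneg.mpr hspos.le) (hp k), ?_,
      fun k => mul_nonneg (inv_nonneg.mpr htpos.le) (hq k), ?_, ?_⟩
    · rw [vnorm_smul' _ (inv_nonneg.mpr hspos.le), ← hs, inv_mul_cancel₀ hspos.ne']
    · rw [vnorm_smul' _ (inv_nonneg.mpr htpos.le), ← ht, inv_mul_cancel₀ htpos.ne']
    intro u' v' hu' hnu' hv' hnv'
    have lhsE : (s⁻¹ • p) ⬝ᵥ (-M).mulVec (t⁻¹ • q) = s⁻¹ * (t⁻¹ * -D) := by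
      rw [mulVec_smul, neg_mulVec, smul_dotProduct, dotProduct_smul, dotProduct_neg,
        smul_eq_mul, smul_eq_mul, hD]
    have rhsE : u' ⬝ᵥ (-M).mulVec v' = -(u' ⬝ᵥ M.mulVec v') := by
      rw [neg_mulVec, dotProduct_neg]
    rw [lhsE, rhsE]
    set w := u' ⬝ᵥ M.mulVec v' with hw
    have huu' : u' ⬝ᵥ u' = 1 := by rw [← vnorm_sq, hnu']; norm_num
    have hvv' : v' ⬝ᵥ v' = 1 := by rw [← vnorm_sq, hnv']; norm_num
    -- show s * t * w ≤ D
    have hstw : s * t * w ≤ D := by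
      rcases le_or_gt w 0 with hw0 | hw0
      · nlinarith [mul_pos hspos htpos]
      · have hr : 0 ≤ Real.sqrt w := Real.sqrt_nonneg w
        have hr2 : Real.sqrt w * Real.sqrt w = w := Real.mul_self_sqrt hw0.le
        have key2 := hopt (Real.sqrt w • u') (Real.sqrt w • v')
          (fun k => mul_nonneg hr (hu' k)) (fun k => mul_nonneg hr (hv' k))
        rw [frob_expand, frob_expand] at key2
        have f1 : (Real.sqrt w • u') ⬝ᵥ M.mulVec (Real.sqrt w • v')
            = Real.sqrt w * (Real.sqrt w * w) := by
          rw [mulVec_smul, smul_dotProduct, dotProduct_smul, smul_eq_mul, smul_eq_mul, hw]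
        have f2 : (Real.sqrt w • u') ⬝ᵥ (Real.sqrt w • u')
            = Real.sqrt w * (Real.sqrt w * (u' ⬝ᵥ u')) := by
          rw [smul_dotProduct, dotProduct_smul, smul_eq_mul, smul_eq_mul]
        have f3 : (Real.sqrt w • v') ⬝ᵥ (Real.sqrt w • v')
            = Real.sqrt w * (Real.sqrt w * (v' ⬝ᵥ v')) := by
          rw [smul_dotProduct, dotProduct_smul, smul_eq_mul, smul_eq_mul]
        rw [f1, f2, f3, huu', hvv', hpp, hqq, ← hD] at key2
        -- key2 : F - 2D + s²t² ≤ F - 2w² + w²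
        have key2' : w * w ≤ 2 * D - (s * t) * (s * t) := by nlinarith [key2, hr2]
        have h9 : (s * t * w) * (s * t * w) ≤ D * D := by
          nlinarith [key2', sq_nonneg (D - (s * t) * (s * t)), sq_nonneg (s * t)]
        nlinarith [h9, hDpos, mul_pos (mul_pos hspos htpos) hw0]
    have h6 := mul_le_mul_of_nonneg_left hstw
      (le_of_lt (mul_pos (inv_pos.mpr hspos) (inv_pos.mpr htpos)))
    have h7 : s⁻¹ * t⁻¹ * (s * t * w) = w := by
      field_simp
    have h8 : s⁻¹ * (t⁻¹ * -D) = -(s⁻¹ * t⁻¹ * D) := by ring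
    linarith
end

section
/- Let A ∈ ℝ^{m×n} be nonzero with m ≥ n, let P ⊆ ℝ^m and Q ⊆ ℝ^n be closed convex cones, and let U, V be matrices with orthonormal columns such that A/‖A‖ = Uᵀ V. Then (u,v) is a critical pair of SV(A,P,Q) if and only if (Uu, Vv) is a critical pair of MA(UP, VQ), where UP = {Uu : u ∈ P} and VQ = {Vv : v ∈ Q}. -/
open Matrix

/-- Spectral norm of a real matrix: the largest value of `‖Av‖` over the unit ball. -/
noncomputable def specNorm {m n : ℕ} (A : Matrix (Fin m) (Fin n) ℝ) : ℝ :=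
  sSup {r : ℝ | ∃ v : Fin n → ℝ, vnorm v ≤ 1 ∧ r = vnorm (A.mulVec v)}

/-- `(u,v)` is a critical pair of `SV(A,P,Q)`: a feasible pair satisfying the KKT
conditions `P ∋ u ⊥ (Av − σu) ∈ P*`, `Q ∋ v ⊥ (Aᵀu − σv) ∈ Q*` with `σ = ⟨u,Av⟩`. -/
def IsCritSV {m n : ℕ} (A : Matrix (Fin m) (Fin n) ℝ) (P : Set (Fin m → ℝ))
    (Q : Set (Fin n → ℝ)) (u : Fin m → ℝ) (v : Fin n → ℝ) : Prop :=
  u ∈ P ∧ vnorm u = 1 ∧ v ∈ Q ∧ vnorm v = 1 ∧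
    (∀ w ∈ P, 0 ≤ (A.mulVec v - (u ⬝ᵥ A.mulVec v) • u) ⬝ᵥ w) ∧
    (∀ w ∈ Q, 0 ≤ (Aᵀ.mulVec u - (u ⬝ᵥ A.mulVec v) • v) ⬝ᵥ w) ∧
    u ⬝ᵥ (A.mulVec v - (u ⬝ᵥ A.mulVec v) • u) = 0 ∧
    v ⬝ᵥ (Aᵀ.mulVec u - (u ⬝ᵥ A.mulVec v) • v) = 0

lemma dps {k : ℕ} (v : Fin k → ℝ) : 0 ≤ v ⬝ᵥ v :=
  Finset.sum_nonneg fun _ _ => mul_self_nonneg _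

lemma vnorm_sq_s18 {k : ℕ} (v : Fin k → ℝ) : vnorm v ^ 2 = v ⬝ᵥ v := Real.sq_sqrt (dps v)

lemma specNorm_pos' {m n : ℕ} (A : Matrix (Fin m) (Fin n) ℝ) (hA : A ≠ 0) :
    0 < specNorm A := by
  obtain ⟨i0, j0, hij⟩ : ∃ i j, A i j ≠ 0 := by
    by_contra h; push_neg at h
    exact hA (by ext i j; simpa using h i j)
  have hbdd : BddAbove {r : ℝ | ∃ v : Fin n → ℝ, vnorm v ≤ 1 ∧ r = vnorm (A.mulVec v)} := by
    refine ⟨Real.sqrt (∑ i, ∑ j, A i j ^ 2), ?_⟩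
    rintro r ⟨v, hv, rfl⟩
    have hv2 : v ⬝ᵥ v ≤ 1 := by
      have h2 := vnorm_sq_s18 v
      have h0 : (0:ℝ) ≤ vnorm v := Real.sqrt_nonneg _
      nlinarith [h0, hv, h2]
    unfold vnorm
    apply Real.sqrt_le_sqrt
    have h1 : A.mulVec v ⬝ᵥ A.mulVec v = ∑ i, (∑ j, A i j * v j) * (∑ j, A i j * v j) := by
      simp [Matrix.mulVec, dotProduct]
    rw [h1]
    refine Finset.sum_le_sum fun i _ => ?_
    have hc := Finset.sum_mul_sq_le_sq_mul_sq Finset.univ (fun j => A i j) v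
    have hvv : ∑ j, v j ^ 2 = v ⬝ᵥ v := by simp [dotProduct, sq]
    calc (∑ j, A i j * v j) * (∑ j, A i j * v j) = (∑ j, A i j * v j) ^ 2 := (sq _).symm
      _ ≤ (∑ j, A i j ^ 2) * ∑ j, v j ^ 2 := hc
      _ ≤ (∑ j, A i j ^ 2) * 1 := by
          refine mul_le_mul_of_nonneg_left ?_ (Finset.sum_nonneg fun _ _ => sq_nonneg _)
          rw [hvv]; exact hv2
      _ = ∑ j, A i j ^ 2 := mul_one _
  have hmem : vnorm (A.mulVec (Pi.single j0 1)) ∈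
      {r : ℝ | ∃ v : Fin n → ℝ, vnorm v ≤ 1 ∧ r = vnorm (A.mulVec v)} := by
    refine ⟨Pi.single j0 1, le_of_eq ?_, rfl⟩
    unfold vnorm
    rw [dotProduct_single]
    simp
  have hpos : 0 < vnorm (A.mulVec (Pi.single j0 1)) := by
    unfold vnorm
    rw [Real.sqrt_pos]
    have h1 : A.mulVec (Pi.single j0 1) ⬝ᵥ A.mulVec (Pi.single j0 1) = ∑ i, A i j0 * A i j0 := by
      simp [Matrix.mulVec_single, dotProduct]
    rw [h1]
    have : 0 < A i0 j0 * A i0 j0 := mul_self_pos.mpr hij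
    refine lt_of_lt_of_le this ?_
    exact Finset.single_le_sum (f := fun i => A i j0 * A i j0) (fun i _ => mul_self_nonneg _) (Finset.mem_univ i0)
  exact lt_of_lt_of_le hpos (le_csSup hbdd hmem)

lemma nn_of_mul {s x : ℝ} (hs : 0 < s) (h : 0 ≤ s * x) : 0 ≤ x :=
  le_of_not_gt fun hx => absurd h (not_le.mpr (mul_neg_of_pos_of_neg hs hx))

/-- If `A ≠ 0`, `m ≥ n`, `P`, `Q` are closed convex cones, and `A/‖A‖ = Uᵀ V` with `U`,
`V` having orthonormal columns, then `(u,v)` is a critical pair of `SV(A,P,Q)` iff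
`(Uu, Vv)` is a critical pair of `MA(UP, VQ) = SV(I, UP, VQ)`. -/
theorem stmt18 {m n d : ℕ} (hmn : n ≤ m) (A : Matrix (Fin m) (Fin n) ℝ) (hA : A ≠ 0)
    (P : Set (Fin m → ℝ)) (Q : Set (Fin n → ℝ))
    (hPclosed : IsClosed P) (hPconvex : Convex ℝ P)
    (hPcone : ∀ c : ℝ, 0 ≤ c → ∀ x ∈ P, c • x ∈ P)
    (hQclosed : IsClosed Q) (hQconvex : Convex ℝ Q)
    (hQcone : ∀ c : ℝ, 0 ≤ c → ∀ y ∈ Q, c • y ∈ Q)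
    (U : Matrix (Fin d) (Fin m) ℝ) (V : Matrix (Fin d) (Fin n) ℝ)
    (hU : Uᵀ * U = 1) (hV : Vᵀ * V = 1)
    (hUV : (specNorm A)⁻¹ • A = Uᵀ * V)
    (u : Fin m → ℝ) (v : Fin n → ℝ) :
    IsCritSV A P Q u v ↔
      IsCritSV (1 : Matrix (Fin d) (Fin d) ℝ)
        {x | ∃ u' ∈ P, x = U.mulVec u'} {y | ∃ v' ∈ Q, y = V.mulVec v'}
        (U.mulVec u) (V.mulVec v) := by
  have hspos : 0 < specNorm A := specNorm_pos' A hA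
  set s := specNorm A with hsdef
  have hAeq : A = s • (Uᵀ * V) := by
    rw [← hUV, smul_smul, mul_inv_cancel₀ hspos.ne', one_smul]
  have hUdot : ∀ x y : Fin m → ℝ, U.mulVec x ⬝ᵥ U.mulVec y = x ⬝ᵥ y := fun x y => by
    rw [Matrix.dotProduct_mulVec, ← Matrix.mulVec_transpose, Matrix.mulVec_mulVec, hU,
      Matrix.one_mulVec]
  have hVdot : ∀ x y : Fin n → ℝ, V.mulVec x ⬝ᵥ V.mulVec y = x ⬝ᵥ y := fun x y => by
    rw [Matrix.dotProduct_mulVec, ← Matrix.mulVec_transpose, Matrix.mulVec_mulVec, hV,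
      Matrix.one_mulVec]
  have hUT : ∀ (x : Fin m → ℝ) (y : Fin d → ℝ), x ⬝ᵥ Uᵀ.mulVec y = U.mulVec x ⬝ᵥ y :=
    fun x y => by rw [Matrix.dotProduct_mulVec, Matrix.vecMul_transpose]
  have hVT : ∀ (x : Fin n → ℝ) (y : Fin d → ℝ), x ⬝ᵥ Vᵀ.mulVec y = V.mulVec x ⬝ᵥ y :=
    fun x y => by rw [Matrix.dotProduct_mulVec, Matrix.vecMul_transpose]
  have hInjU : ∀ x y : Fin m → ℝ, U.mulVec x = U.mulVec y → x = y := by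
    intro x y h
    have h2 : (x - y) ⬝ᵥ (x - y) = 0 := by
      rw [← hUdot, Matrix.mulVec_sub, h, sub_self, zero_dotProduct]
    exact sub_eq_zero.mp (dotProduct_self_eq_zero.mp h2)
  have hInjV : ∀ x y : Fin n → ℝ, V.mulVec x = V.mulVec y → x = y := by
    intro x y h
    have h2 : (x - y) ⬝ᵥ (x - y) = 0 := by
      rw [← hVdot, Matrix.mulVec_sub, h, sub_self, zero_dotProduct]
    exact sub_eq_zero.mp (dotProduct_self_eq_zero.mp h2)
  have hAv : A.mulVec v = s • Uᵀ.mulVec (V.mulVec v) := by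
    rw [hAeq, Matrix.smul_mulVec, Matrix.mulVec_mulVec]
  have hATu : Aᵀ.mulVec u = s • Vᵀ.mulVec (U.mulVec u) := by
    rw [hAeq, Matrix.transpose_smul, Matrix.transpose_mul, Matrix.transpose_transpose,
      Matrix.smul_mulVec, Matrix.mulVec_mulVec]
  set σ' := U.mulVec u ⬝ᵥ V.mulVec v with hσ'def
  have hσ : u ⬝ᵥ A.mulVec v = s * σ' := by
    rw [hAv, dotProduct_smul, hUT, smul_eq_mul]
  have e1 : ∀ w : Fin m → ℝ, A.mulVec v ⬝ᵥ w = s * (V.mulVec v ⬝ᵥ U.mulVec w) := by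
    intro w
    rw [hAv, smul_dotProduct, smul_eq_mul, dotProduct_comm (Uᵀ.mulVec _) w,
      hUT, dotProduct_comm]
  have e2 : ∀ w : Fin n → ℝ, Aᵀ.mulVec u ⬝ᵥ w = s * (U.mulVec u ⬝ᵥ V.mulVec w) := by
    intro w
    rw [hATu, smul_dotProduct, smul_eq_mul, dotProduct_comm (Vᵀ.mulVec _) w,
      hVT, dotProduct_comm]
  have keyP : ∀ w : Fin m → ℝ,
      (A.mulVec v - (u ⬝ᵥ A.mulVec v) • u) ⬝ᵥ w
        = s * ((V.mulVec v - σ' • U.mulVec u) ⬝ᵥ U.mulVec w) := by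
    intro w
    rw [sub_dotProduct, smul_dotProduct, sub_dotProduct,
      smul_dotProduct, e1, hσ, hUdot, smul_eq_mul, smul_eq_mul]
    ring
  have keyQ : ∀ w : Fin n → ℝ,
      (Aᵀ.mulVec u - (u ⬝ᵥ A.mulVec v) • v) ⬝ᵥ w
        = s * ((U.mulVec u - σ' • V.mulVec v) ⬝ᵥ V.mulVec w) := by
    intro w
    rw [sub_dotProduct, smul_dotProduct, sub_dotProduct,
      smul_dotProduct, e2, hσ, hVdot, smul_eq_mul, smul_eq_mul]
    ring
  have hnU : vnorm (U.mulVec u) = vnorm u := by unfold vnorm; rw [hUdot]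
  have hnV : vnorm (V.mulVec v) = vnorm v := by unfold vnorm; rw [hVdot]
  simp only [IsCritSV, Matrix.one_mulVec, Matrix.transpose_one, Set.mem_setOf_eq]
  constructor
  · rintro ⟨hu, hnu, hv, hnv, hP, hQ, -, -⟩
    have hu1 : u ⬝ᵥ u = 1 := by
      have h := vnorm_sq_s18 u; rw [hnu] at h; simpa using h.symm
    have hv1 : v ⬝ᵥ v = 1 := by
      have h := vnorm_sq_s18 v; rw [hnv] at h; simpa using h.symm
    refine ⟨⟨u, hu, rfl⟩, by rw [hnU]; exact hnu, ⟨v, hv, rfl⟩, by rw [hnV]; exact hnv,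
      ?_, ?_, ?_, ?_⟩
    · rintro w ⟨w', hw', rfl⟩
      exact nn_of_mul hspos (by rw [← keyP w']; exact hP w' hw')
    · rintro w ⟨w', hw', rfl⟩
      exact nn_of_mul hspos (by rw [← keyQ w']; exact hQ w' hw')
    · rw [dotProduct_sub, dotProduct_smul, smul_eq_mul, hUdot, hu1,
        mul_one, sub_self]
    · rw [dotProduct_sub, dotProduct_smul, smul_eq_mul, hVdot, hv1,
        mul_one, dotProduct_comm, sub_self]
  · rintro ⟨⟨u', hu', heu⟩, hnu, ⟨v', hv', hev⟩, hnv, hP, hQ, -, -⟩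
    obtain rfl : u = u' := hInjU _ _ heu
    obtain rfl : v = v' := hInjV _ _ hev
    have hnu' : vnorm u = 1 := by rw [← hnU]; exact hnu
    have hnv' : vnorm v = 1 := by rw [← hnV]; exact hnv
    have hu1 : u ⬝ᵥ u = 1 := by
      have h := vnorm_sq_s18 u; rw [hnu'] at h; simpa using h.symm
    have hv1 : v ⬝ᵥ v = 1 := by
      have h := vnorm_sq_s18 v; rw [hnv'] at h; simpa using h.symm
    refine ⟨hu', hnu', hv', hnv', ?_, ?_, ?_, ?_⟩
    · intro w hw
      rw [keyP w]
      exact mul_nonneg hspos.le (hP (U.mulVec w) ⟨w, hw, rfl⟩)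
    · intro w hw
      rw [keyQ w]
      exact mul_nonneg hspos.le (hQ (V.mulVec w) ⟨w, hw, rfl⟩)
    · rw [dotProduct_sub, dotProduct_smul, smul_eq_mul, hu1, mul_one, hσ]
      exact sub_self _
    · rw [dotProduct_sub, dotProduct_smul, smul_eq_mul, hv1, mul_one, hσ]
      have : v ⬝ᵥ Vᵀ.mulVec (U.mulVec u) = σ' := by
        rw [hVT, dotProduct_comm]
      rw [hATu, dotProduct_smul, this, smul_eq_mul, sub_self]
end
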